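/- Let b : ℝ → ℝ be continuous, let γ ∈ ℝ with γ ≠ 0, let k ∈ ℝ, and let φ : ℝ → ℝ be twice continuously differentiable, 1-periodic, with φ(x) > 0 for all x ∈ ℝ, satisfying φ''(x) + b(x)φ'(x) + γ b(x)φ(x) = k φ(x) for all x ∈ ℝ. Then φ'(x) + γφ(x) ≠ 0 for all x ∈ ℝ; in particular φ' + γφ has a constant strict sign on ℝ. -/

import Mathlib

/-!
Put `ψ = φ' + γ φ`. The equation for `φ` becomes the first-order equation
`ψ' = (γ - b) ψ + (k - γ²) φ`, and `ψ` is `1`-periodic. After multiplication by the integrating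
factor `exp (-∫₀ˣ (γ - b))`, the function `ψ` turns into one whose derivative is
`(k - γ²) φ exp (-∫₀ˣ (γ - b))`. If `k ≠ γ²` this is strictly monotone, so it cannot vanish at
both `x₀` and `x₀ + 1`, as it would at a zero `x₀` of `ψ`. If `k = γ²` it is constant, so a
single zero of `ψ` forces `φ' = -γ φ`, i.e. `φ = C e^{-γ x}`, which is not periodic for `γ ≠ 0`.
-/

open Real intervalIntegral

theorem Function.Periodic.deriv {f : ℝ → ℝ} {c : ℝ} (hf : Function.Periodic f c) :
    Function.Periodic (deriv f) c := fun x => by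
  rw [← deriv_comp_add_const, hf.funext]

theorem Continuous.forall_pos_or_forall_neg {f : ℝ → ℝ} (hf : Continuous f)
    (hf0 : ∀ x, f x ≠ 0) : (∀ x, 0 < f x) ∨ (∀ x, f x < 0) := by
  by_contra! ⟨⟨a, ha⟩, ⟨c, hc⟩⟩
  obtain ⟨x, hx⟩ := intermediate_value_univ a c hf ⟨ha, hc⟩
  exact hf0 x hx

section IntegratingFactor

variable {a ψ ψ' : ℝ → ℝ}

theorem hasDerivAt_mul_exp_neg_integral (ha : Continuous a) {x : ℝ}
    (hψ : HasDerivAt ψ (ψ' x) x) :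
    HasDerivAt (fun y => ψ y * exp (-∫ t in (0 : ℝ)..y, a t))
      ((ψ' x - a x * ψ x) * exp (-∫ t in (0 : ℝ)..x, a t)) x := by
  have hA : HasDerivAt (fun y => ∫ t in (0 : ℝ)..y, a t) (a x) x :=
    integral_hasDerivAt_right (ha.intervalIntegrable 0 x)
      ha.aestronglyMeasurable.stronglyMeasurableAtFilter ha.continuousAt
  have hE : HasDerivAt (fun y => exp (-∫ t in (0 : ℝ)..y, a t))
      (exp (-∫ t in (0 : ℝ)..x, a t) * -a x) x := hA.neg.exp
  exact (hψ.mul hE).congr_deriv (by ring)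

theorem eq_zero_of_hasDerivAt_eq_mul (ha : Continuous a)
    (hψ : ∀ x, HasDerivAt ψ (a x * ψ x) x) {x₀ : ℝ} (hx₀ : ψ x₀ = 0) (x : ℝ) : ψ x = 0 := by
  have hg := fun y => hasDerivAt_mul_exp_neg_integral (ψ' := fun y => a y * ψ y) ha (hψ y)
  have hconst := is_const_of_deriv_eq_zero (fun y => (hg y).differentiableAt)
    (fun y => by rw [(hg y).deriv, sub_self, zero_mul]) x x₀
  simpa [hx₀, (exp_pos _).ne'] using hconst

theorem Function.Periodic.ne_zero_of_hasDerivAt_sub_mul {T : ℝ} (hT : T ≠ 0)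
    (hper : Function.Periodic ψ T) (ha : Continuous a) (hψ : ∀ x, HasDerivAt ψ (ψ' x) x)
    (hsign : (∀ x, 0 < ψ' x - a x * ψ x) ∨ (∀ x, ψ' x - a x * ψ x < 0)) (x : ℝ) :
    ψ x ≠ 0 := by
  intro hx
  set g := fun y => ψ y * exp (-∫ t in (0 : ℝ)..y, a t)
  have hg := fun y => hasDerivAt_mul_exp_neg_integral ha (hψ y)
  have hinj : Function.Injective g := by
    rcases hsign with hpos | hneg
    · exact (strictMono_of_deriv_pos fun y => by
        rw [(hg y).deriv]; exact mul_pos (hpos y) (exp_pos _)).injective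
    · exact (strictAnti_of_deriv_neg fun y => by
        rw [(hg y).deriv]; exact mul_neg_of_neg_of_pos (hneg y) (exp_pos _)).injective
  have hgx : g (x + T) = g x := by simp only [g, hper x, hx, zero_mul]
  exact hT (add_eq_left.mp (hinj hgx))

end IntegratingFactor

theorem Function.Periodic.eq_zero_of_hasDerivAt_neg_mul {φ : ℝ → ℝ} {γ T : ℝ}
    (hT : T ≠ 0) (hper : Function.Periodic φ T) (hφ0 : φ 0 ≠ 0)
    (hφ : ∀ x, HasDerivAt φ (-γ * φ x) x) : γ = 0 := by
  have hh : ∀ x, HasDerivAt (fun y => φ y * exp (γ * y)) 0 x := fun x => by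
    have hE : HasDerivAt (fun y => exp (γ * y)) (exp (γ * x) * γ) x := by
      simpa using ((hasDerivAt_id x).const_mul γ).exp
    exact ((hφ x).mul hE).congr_deriv (by ring)
  have hconst := is_const_of_deriv_eq_zero (fun y => (hh y).differentiableAt)
    (fun y => (hh y).deriv) T 0
  rw [← zero_add T, hper 0, zero_add, mul_zero, exp_zero, mul_one, mul_eq_left₀ hφ0,
    exp_eq_one_iff, mul_eq_zero] at hconst
  exact hconst.resolve_right hT

theorem stmt1 (b : ℝ → ℝ) (γ k : ℝ) (φ : ℝ → ℝ)
    (hb : Continuous b) (hγ : γ ≠ 0)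
    (hφ : ContDiff ℝ 2 φ) (hφper : Function.Periodic φ 1) (hφpos : ∀ x, 0 < φ x)
    (heq : ∀ x : ℝ,
      deriv (deriv φ) x + b x * deriv φ x + γ * b x * φ x = k * φ x) :
    (∀ x : ℝ, deriv φ x + γ * φ x ≠ 0) ∧
      ((∀ x : ℝ, 0 < deriv φ x + γ * φ x) ∨ (∀ x : ℝ, deriv φ x + γ * φ x < 0)) := by
  set ψ := fun x => deriv φ x + γ * φ x
  have hφd : Differentiable ℝ φ := hφ.differentiable (by norm_num)
  have hψ : ∀ x, HasDerivAt ψ (deriv (deriv φ) x + γ * deriv φ x) x := fun x =>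
    (hφ.differentiable_deriv_two x).hasDerivAt.add ((hφd x).hasDerivAt.const_mul γ)
  have hψeq : ∀ x, deriv (deriv φ) x + γ * deriv φ x - (γ - b x) * ψ x = (k - γ ^ 2) * φ x :=
    fun x => by linear_combination heq x
  have hψper : Function.Periodic ψ 1 := fun x => by
    simp only [ψ, hφper.deriv x, hφper x]
  have ha : Continuous fun x => γ - b x := continuous_const.sub hb
  have hψ0 : ∀ x, ψ x ≠ 0 := by
    intro x₀ hx₀
    by_cases hk : k - γ ^ 2 = 0
    · have hψ_zero := eq_zero_of_hasDerivAt_eq_mul ha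
        (fun x => (hψ x).congr_deriv (by linear_combination hψeq x + φ x * hk)) hx₀
      exact hγ (hφper.eq_zero_of_hasDerivAt_neg_mul one_ne_zero (hφpos 0).ne' fun x =>
        (hφd x).hasDerivAt.congr_deriv (by linear_combination hψ_zero x))
    · have hsign : (∀ x, 0 < (k - γ ^ 2) * φ x) ∨ (∀ x, (k - γ ^ 2) * φ x < 0) :=
        (lt_or_gt_of_ne hk).symm.imp (fun h x => mul_pos h (hφpos x))
          (fun h x => mul_neg_of_neg_of_pos h (hφpos x))
      exact hψper.ne_zero_of_hasDerivAt_sub_mul one_ne_zero ha hψ (by simpa only [hψeq]) x₀ hx₀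
  have hψc : Continuous ψ := continuous_iff_continuousAt.2 fun x => (hψ x).continuousAt
  exact ⟨hψ0, hψc.forall_pos_or_forall_neg hψ0⟩
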